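/- arXiv:1209.5668 — 6 statements merged into one kernel-verified Lean document; each statement's English description precedes it below -/
import Mathlib

section
/- Let τ>0, let g : ℝ → ℝ be increasing and continuous, let T>0 and N ≥ 1. Let u, v : [−τ,T]×ℝ^N → ℝ be bounded continuous functions that are C¹ in t and C² in x on (0,T)×ℝ^N, and assume that for all (t,x) ∈ (0,T)×ℝ^N: ∂_t u(t,x) − Δu(t,x) + u(t,x) − g(u(t−τ,x)) ≤ 0 and ∂_t v(t,x) − Δv(t,x) + v(t,x) − g(v(t−τ,x)) ≥ 0, where Δ is the Laplacian in the x variable. If u(θ,x) ≤ v(θ,x) for all (θ,x) ∈ [−τ,0]×ℝ^N, then u(t,x) ≤ v(t,x) for all (t,x) ∈ [−τ,T]×ℝ^N. -/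
/-
Method of steps plus a penalized maximum principle. On a window of length `τ` the delayed terms
are already ordered, `g (u (t - τ) x) ≤ g (v (t - τ) x)` since `g` is monotone, so there
`(∂ₜ - Δ + 1) (u - v) ≤ 0`. If `u - v` were positive somewhere in the window, the penalized gap
`u - v - ε ((2N + 1) t + ‖x‖²)` would attain a positive maximum on `[0, t₁] × ℝᴺ` (boundedness
makes it tend to `-∞` as `‖x‖ → ∞`), at a time `t₀ > 0` by the initial ordering. At that point
`∂ₜ (u - v) ≥ ε (2N + 1)` and `Δ (u - v) ≤ 2Nε` (the Laplacian of `‖x‖²` is `2N`), so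
`(∂ₜ - Δ + 1) (u - v) > 0`, a contradiction. Iterating over the windows covers `[-τ, T)`, and
continuity gives `t = T`.
-/

open Set Filter Metric
open scoped Topology BigOperators

/-- The Laplacian of a function on `ℝ^N`, as a sum of pure second derivatives. -/
noncomputable def lap {N : ℕ} (g : EuclideanSpace ℝ (Fin N) → ℝ)
    (x : EuclideanSpace ℝ (Fin N)) : ℝ :=
  ∑ i : Fin N, iteratedFDeriv ℝ 2 g x ![EuclideanSpace.single i 1, EuclideanSpace.single i 1]

theorem IsLocalMax.deriv_deriv_nonpos {f : ℝ → ℝ} {a : ℝ} (h : IsLocalMax f a)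
    (hc : ContinuousAt f a) : deriv (deriv f) a ≤ 0 := by
  by_contra! hpos
  -- a positive second derivative would make `a` a local minimum too, so `f` is locally constant
  have hmin := isLocalMin_of_deriv_deriv_pos hpos h.deriv_eq_zero hc
  have hconst : f =ᶠ[𝓝 a] fun _ => f a := (h.and hmin).mono fun _ hx => le_antisymm hx.1 hx.2
  have : deriv (deriv f) a = 0 := by simp [hconst.deriv.deriv_eq]
  linarith

theorem HasDerivAt.nonneg_of_isLocalMaxOn_Iic {f : ℝ → ℝ} {f' a : ℝ} (hf : HasDerivAt f f' a)
    (h : IsLocalMaxOn f (Iic a) a) : 0 ≤ f' := by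
  have hseg : segment ℝ a (a + -1) ⊆ Iic a := fun y hy => by
    rw [segment_symm, segment_eq_Icc (by linarith)] at hy
    exact hy.2
  have hmem : (-1 : ℝ) ∈ posTangentConeAt (Iic a) a := mem_posTangentConeAt_of_segment_subset hseg
  have := h.hasFDerivWithinAt_nonpos hf.hasFDerivAt.hasFDerivWithinAt hmem
  simpa using this

section Line

variable {E : Type*} [NormedAddCommGroup E] [NormedSpace ℝ E] {f : E → ℝ}

theorem ContDiff.hasDerivAt_comp_line (hf : ContDiff ℝ 1 f) (x h : E) (s : ℝ) :
    HasDerivAt (fun s : ℝ => f (x + s • h)) (fderiv ℝ f (x + s • h) h) s := by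
  have hline : HasDerivAt (fun s : ℝ => x + s • h) h s := by
    simpa using ((hasDerivAt_id s).smul_const h).const_add x
  exact (hf.differentiable one_ne_zero _).hasFDerivAt.comp_hasDerivAt s hline

theorem ContDiff.hasDerivAt_fderiv_comp_line (hf : ContDiff ℝ 2 f) (x h : E) (s : ℝ) :
    HasDerivAt (fun s : ℝ => fderiv ℝ f (x + s • h) h)
      (iteratedFDeriv ℝ 2 f (x + s • h) ![h, h]) s := by
  have hline : HasDerivAt (fun s : ℝ => x + s • h) h s := by
    simpa using ((hasDerivAt_id s).smul_const h).const_add x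
  have hf' : ContDiff ℝ 1 (fderiv ℝ f) := hf.fderiv_right (by norm_num)
  have := ((hf'.differentiable one_ne_zero _).hasFDerivAt.comp_hasDerivAt s hline).clm_apply
    (hasDerivAt_const s h)
  rw [iteratedFDeriv_two_apply]
  simpa [Function.comp_def] using this

theorem IsLocalMax.iteratedFDeriv_two_nonpos (hf : ContDiff ℝ 2 f) {x : E} (hmax : IsLocalMax f x)
    (h : E) : iteratedFDeriv ℝ 2 f x ![h, h] ≤ 0 := by
  have hline : IsLocalMax (fun s : ℝ => f (x + s • h)) 0 := by
    have : IsLocalMax f ((fun s : ℝ => x + s • h) 0) := by simpa using hmax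
    exact this.comp_continuous (g := fun s : ℝ => x + s • h) (by fun_prop)
  have hderiv : deriv (fun s : ℝ => f (x + s • h)) = fun s => fderiv ℝ f (x + s • h) h :=
    funext fun s => ((hf.of_le (by norm_num)).hasDerivAt_comp_line x h s).deriv
  have := hline.deriv_deriv_nonpos (hf.continuous.comp (by fun_prop)).continuousAt
  rwa [hderiv, (hf.hasDerivAt_fderiv_comp_line x h 0).deriv, zero_smul, add_zero] at this

end Line

theorem iteratedFDeriv_two_norm_sq {F : Type*} [NormedAddCommGroup F] [InnerProductSpace ℝ F]
    (x h : F) : iteratedFDeriv ℝ 2 (fun y : F => ‖y‖ ^ 2) x ![h, h] = 2 * ‖h‖ ^ 2 := by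
  rw [iteratedFDeriv_two_apply, fderiv_norm_sq, ← FunLike.coe_smul,
    ContinuousLinearMap.fderiv]
  simp only [Matrix.cons_val_zero, Matrix.cons_val_one, FunLike.coe_smul, Pi.smul_apply,
    nsmul_eq_mul]
  rw [← real_inner_self_eq_norm_sq]
  rfl

theorem IsCompact.exists_isMaxOn_prod_sub_mul_norm_sq {X E : Type*} [TopologicalSpace X]
    [T2Space X] [NormedAddCommGroup E] [ProperSpace E] {K : Set X} (hK : IsCompact K)
    (hKne : K.Nonempty) {w : X × E → ℝ} (hw : ContinuousOn w (K ×ˢ univ)) {M : ℝ}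
    (hM : ∀ p ∈ K ×ˢ univ, w p ≤ M) {ε : ℝ} (hε : 0 < ε) :
    ∃ p ∈ K ×ˢ univ, IsMaxOn (fun p => w p - ε * ‖p.2‖ ^ 2) (K ×ˢ univ) p := by
  obtain ⟨a, ha⟩ := hKne
  have hp₀ : ((a, 0) : X × E) ∈ K ×ˢ univ := ⟨ha, mem_univ _⟩
  set R := max 1 ((M - w (a, 0)) / ε)
  have hfar : (K ×ˢ closedBall (0 : E) R)ᶜ ∈ cocompact (X × E) :=
    (hK.prod (isCompact_closedBall 0 R)).compl_mem_cocompact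
  have hcont : ContinuousOn (fun p : X × E => w p - ε * ‖p.2‖ ^ 2) (K ×ˢ univ) :=
    hw.sub (by fun_prop)
  refine hcont.exists_isMaxOn' (hK.isClosed.prod isClosed_univ) hp₀ ?_
  filter_upwards [mem_inf_of_left hfar, mem_inf_of_right (mem_principal_self _)]
    with p hpR hp
  have hR : R < ‖p.2‖ := by
    by_contra! h
    exact hpR ⟨hp.1, mem_closedBall_zero_iff.2 h⟩
  have h1 : 1 < ‖p.2‖ := (le_max_left _ _).trans_lt hR
  have h2 : (M - w (a, 0)) / ε < ‖p.2‖ := (le_max_right _ _).trans_lt hR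
  rw [div_lt_iff₀ hε] at h2
  have := hM p hp
  have h3 : ‖p.2‖ * ε ≤ ε * ‖p.2‖ ^ 2 := by
    nlinarith [mul_pos hε (mul_pos (zero_lt_one.trans h1) (sub_pos.2 h1))]
  simp only [norm_zero]
  linarith

section Laplacian

variable {N : ℕ} {f g : EuclideanSpace ℝ (Fin N) → ℝ}

theorem lap_nonpos_of_isLocalMax (hf : ContDiff ℝ 2 f) {x : EuclideanSpace ℝ (Fin N)}
    (h : IsLocalMax f x) : lap f x ≤ 0 :=
  Finset.sum_nonpos fun _ _ => h.iteratedFDeriv_two_nonpos hf _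

theorem lap_sub (hf : ContDiff ℝ 2 f) (hg : ContDiff ℝ 2 g) (x : EuclideanSpace ℝ (Fin N)) :
    lap (fun y => f y - g y) x = lap f x - lap g x := by
  rw [show (fun y => f y - g y) = f - g from rfl]
  simp only [lap, ← Finset.sum_sub_distrib, iteratedFDeriv_sub_apply hf.contDiffAt hg.contDiffAt,
    sub_apply]

theorem lap_const_mul_norm_sq (c : ℝ) (x : EuclideanSpace ℝ (Fin N)) :
    lap (fun y => c * ‖y‖ ^ 2) x = 2 * N * c := by
  have h := iteratedFDeriv_const_smul_apply' (a := c) (i := 2) (x := x)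
    (f := fun y : EuclideanSpace ℝ (Fin N) => ‖y‖ ^ 2) (contDiff_norm_sq ℝ).contDiffAt
  simp only [smul_eq_mul] at h
  simp only [lap, h, smul_apply, iteratedFDeriv_two_norm_sq, PiLp.norm_single, norm_one, one_pow,
    mul_one, smul_eq_mul, Finset.sum_const, Finset.card_univ, Fintype.card_fin, nsmul_eq_mul]
  ring

end Laplacian

theorem forall_Ico_of_delay_step {τ T : ℝ} (hτ : 0 < τ) {P : ℝ → Prop}
    (hinit : ∀ t ∈ Icc (-τ) 0, P t) (hstep : ∀ t ∈ Ioo 0 T, (∀ s ∈ Ioc 0 t, P (s - τ)) → P t) :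
    ∀ t ∈ Ico (-τ) T, P t := by
  suffices h : ∀ n : ℕ, ∀ t ∈ Ico (-τ) T, t ≤ n * τ → P t by
    intro t ht
    obtain ⟨n, hn⟩ := exists_nat_ge (t / τ)
    exact h n t ht ((div_le_iff₀ hτ).1 hn)
  intro n
  induction n with
  | zero => exact fun t ht htn => hinit t ⟨ht.1, by simpa using htn⟩
  | succ n ih =>
    intro t ht htn
    rcases le_or_gt t 0 with ht0 | ht0
    · exact hinit t ⟨ht.1, ht0⟩
    · refine hstep t ⟨ht0, ht.2⟩ fun s hs =>
        ih (s - τ) ⟨by linarith [hs.1], by linarith [hs.2, ht.2]⟩ ?_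
      push_cast at htn
      linarith [hs.2]

section Comparison

variable {N : ℕ} {τ T : ℝ} {g : ℝ → ℝ} {u v : ℝ → EuclideanSpace ℝ (Fin N) → ℝ}

def IsRegularOn (T : ℝ) (u : ℝ → EuclideanSpace ℝ (Fin N) → ℝ) : Prop :=
  ∀ t ∈ Ioo 0 T, (∀ x, DifferentiableAt ℝ (fun s => u s x) t) ∧ ContDiff ℝ 2 (u t)

noncomputable def delayedResidual (g : ℝ → ℝ) (τ : ℝ) (u : ℝ → EuclideanSpace ℝ (Fin N) → ℝ)
    (t : ℝ) (x : EuclideanSpace ℝ (Fin N)) : ℝ :=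
  deriv (fun s => u s x) t - lap (u t) x + u t x - g (u (t - τ) x)

noncomputable def penalizedGap (u v : ℝ → EuclideanSpace ℝ (Fin N) → ℝ) (ε : ℝ)
    (p : ℝ × EuclideanSpace ℝ (Fin N)) : ℝ :=
  u p.1 p.2 - v p.1 p.2 - ε * (2 * N + 1) * p.1 - ε * ‖p.2‖ ^ 2

theorem penalizedGap_le_sub {ε t : ℝ} (hε : 0 ≤ ε) (ht : 0 ≤ t) (x : EuclideanSpace ℝ (Fin N)) :
    penalizedGap u v ε (t, x) ≤ u t x - v t x := by
  have : 0 ≤ ε * (2 * N + 1) * t := by positivity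
  have : 0 ≤ ε * ‖x‖ ^ 2 := by positivity
  simp only [penalizedGap]
  linarith

theorem lt_of_isMaxOn_penalizedGap (hg : Monotone g)
    (hu_reg : IsRegularOn T u) (hv_reg : IsRegularOn T v)
    (hsub : ∀ t ∈ Ioo 0 T, ∀ x, delayedResidual g τ u t x ≤ 0)
    (hsup : ∀ t ∈ Ioo 0 T, ∀ x, 0 ≤ delayedResidual g τ v t x)
    {ε t₀ : ℝ} {x₀ : EuclideanSpace ℝ (Fin N)} (hε : 0 < ε) (ht₀ : t₀ ∈ Ioo 0 T)
    (hmax : IsMaxOn (penalizedGap u v ε) (Icc 0 t₀ ×ˢ univ) (t₀, x₀))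
    (hdelay : u (t₀ - τ) x₀ ≤ v (t₀ - τ) x₀) :
    u t₀ x₀ < v t₀ x₀ := by
  obtain ⟨hu_t, hu_x⟩ := hu_reg t₀ ht₀
  obtain ⟨hv_t, hv_x⟩ := hv_reg t₀ ht₀
  have htime : ε * (2 * N + 1) ≤ deriv (fun s => u s x₀) t₀ - deriv (fun s => v s x₀) t₀ := by
    have hd : HasDerivAt (fun t => penalizedGap u v ε (t, x₀))
        (deriv (fun s => u s x₀) t₀ - deriv (fun s => v s x₀) t₀ - ε * (2 * N + 1)) t₀ := by
      have := (((hu_t x₀).hasDerivAt.sub (hv_t x₀).hasDerivAt).sub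
        ((hasDerivAt_id t₀).const_mul (ε * (2 * N + 1)))).sub_const (ε * ‖x₀‖ ^ 2)
      simpa [penalizedGap] using this
    have hloc : IsLocalMaxOn (fun t => penalizedGap u v ε (t, x₀)) (Iic t₀) t₀ := by
      filter_upwards [Icc_mem_nhdsLE ht₀.1] with t ht
        using isMaxOn_iff.1 hmax (t, x₀) ⟨ht, mem_univ _⟩
    linarith [hd.nonneg_of_isLocalMaxOn_Iic hloc]
  have hspace : lap (u t₀) x₀ - lap (v t₀) x₀ ≤ 2 * N * ε := by
    have hloc : IsLocalMax (fun x => u t₀ x - v t₀ x - ε * ‖x‖ ^ 2) x₀ :=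
      Eventually.of_forall fun x => by
        have := isMaxOn_iff.1 hmax (t₀, x) ⟨right_mem_Icc.2 ht₀.1.le, mem_univ x⟩
        simp only [penalizedGap] at this
        linarith
    have hq : ContDiff ℝ 2 fun x : EuclideanSpace ℝ (Fin N) => ε * ‖x‖ ^ 2 :=
      contDiff_const.mul (contDiff_norm_sq ℝ)
    have := lap_nonpos_of_isLocalMax ((hu_x.sub hv_x).sub hq) hloc
    rw [lap_sub (hu_x.sub hv_x) hq, lap_sub hu_x hv_x, lap_const_mul_norm_sq] at this
    linarith
  have hresidual := sub_nonpos.2 ((hsub t₀ ht₀ x₀).trans (hsup t₀ ht₀ x₀))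
  simp only [delayedResidual] at hresidual
  linarith [hg hdelay]

theorem le_of_delayed_le (hg : Monotone g)
    (hu_cont : ContinuousOn (fun p : ℝ × EuclideanSpace ℝ (Fin N) => u p.1 p.2)
      (Icc 0 T ×ˢ univ))
    (hv_cont : ContinuousOn (fun p : ℝ × EuclideanSpace ℝ (Fin N) => v p.1 p.2)
      (Icc 0 T ×ˢ univ))
    {M : ℝ} (hM : ∀ t ∈ Icc 0 T, ∀ x, u t x - v t x ≤ M)
    (hu_reg : IsRegularOn T u) (hv_reg : IsRegularOn T v)
    (hsub : ∀ t ∈ Ioo 0 T, ∀ x, delayedResidual g τ u t x ≤ 0)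
    (hsup : ∀ t ∈ Ioo 0 T, ∀ x, 0 ≤ delayedResidual g τ v t x)
    (h0 : ∀ x, u 0 x ≤ v 0 x) {t₁ : ℝ} (ht₁ : t₁ ∈ Ioo 0 T)
    (hdelay : ∀ t ∈ Ioc 0 t₁, ∀ x, u (t - τ) x ≤ v (t - τ) x) (x₁ : EuclideanSpace ℝ (Fin N)) :
    u t₁ x₁ ≤ v t₁ x₁ := by
  by_contra! h₁
  obtain ⟨ε, hε, hεx₁⟩ := exists_pos_mul_lt (sub_pos.2 h₁) ((2 * N + 1) * t₁ + ‖x₁‖ ^ 2)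
  have hsubset : Icc 0 t₁ ×ˢ (univ : Set (EuclideanSpace ℝ (Fin N))) ⊆ Icc 0 T ×ˢ univ :=
    prod_mono (Icc_subset_Icc_right ht₁.2.le) subset_rfl
  obtain ⟨⟨t₀, x₀⟩, ⟨ht₀, -⟩, hmax⟩ := isCompact_Icc.exists_isMaxOn_prod_sub_mul_norm_sq
    (nonempty_Icc.2 ht₁.1.le)
    (w := fun p => u p.1 p.2 - v p.1 p.2 - ε * (2 * N + 1) * p.1)
    (((hu_cont.sub hv_cont).mono hsubset).sub (by fun_prop))
    (M := M) (fun p hp => by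
      have : 0 ≤ ε * (2 * N + 1) * p.1 := mul_nonneg (by positivity) hp.1.1
      linarith [hM p.1 (Icc_subset_Icc_right ht₁.2.le hp.1) p.2])
    hε
  have hmax : IsMaxOn (penalizedGap u v ε) (Icc 0 t₁ ×ˢ univ) (t₀, x₀) := hmax
  have hpos : 0 < penalizedGap u v ε (t₀, x₀) := by
    refine lt_of_lt_of_le ?_
      (isMaxOn_iff.1 hmax (t₁, x₁) ⟨right_mem_Icc.2 ht₁.1.le, mem_univ x₁⟩)
    simp only [penalizedGap]
    linarith
  have hgap := penalizedGap_le_sub (u := u) (v := v) hε.le ht₀.1 x₀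
  have ht₀pos : 0 < t₀ := by
    refine ht₀.1.lt_of_ne fun h => ?_
    subst h
    linarith [h0 x₀]
  have hlt := lt_of_isMaxOn_penalizedGap hg hu_reg hv_reg hsub hsup hε
    ⟨ht₀pos, ht₀.2.trans_lt ht₁.2⟩
    (hmax.on_subset (prod_mono (Icc_subset_Icc_right ht₀.2) subset_rfl))
    (hdelay t₀ ⟨ht₀pos, ht₀.2⟩ x₀)
  linarith

end Comparison

theorem stmt_0_general {N : ℕ} (τ T : ℝ) (hτ : 0 < τ) (hT : 0 < T)
    (g : ℝ → ℝ) (hg : StrictMono g)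
    (u v : ℝ → EuclideanSpace ℝ (Fin N) → ℝ)
    (hu_cont : ContinuousOn (fun p : ℝ × EuclideanSpace ℝ (Fin N) => u p.1 p.2)
      (Icc (-τ) T ×ˢ univ))
    (hv_cont : ContinuousOn (fun p : ℝ × EuclideanSpace ℝ (Fin N) => v p.1 p.2)
      (Icc (-τ) T ×ˢ univ))
    (hu_bdd : ∃ M, ∀ t ∈ Icc (-τ) T, ∀ x, |u t x| ≤ M)
    (hv_bdd : ∃ M, ∀ t ∈ Icc (-τ) T, ∀ x, |v t x| ≤ M)
    (hu_reg : ∀ t ∈ Ioo 0 T, (∀ x, DifferentiableAt ℝ (fun s => u s x) t) ∧ ContDiff ℝ 2 (u t))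
    (hv_reg : ∀ t ∈ Ioo 0 T, (∀ x, DifferentiableAt ℝ (fun s => v s x) t) ∧ ContDiff ℝ 2 (v t))
    (hsub : ∀ t ∈ Ioo 0 T, ∀ x,
      deriv (fun s => u s x) t - lap (u t) x + u t x - g (u (t - τ) x) ≤ 0)
    (hsup : ∀ t ∈ Ioo 0 T, ∀ x,
      0 ≤ deriv (fun s => v s x) t - lap (v t) x + v t x - g (v (t - τ) x))
    (hinit : ∀ θ ∈ Icc (-τ) 0, ∀ x, u θ x ≤ v θ x) :
    ∀ t ∈ Icc (-τ) T, ∀ x, u t x ≤ v t x := by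
  obtain ⟨Mu, hMu⟩ := hu_bdd
  obtain ⟨Mv, hMv⟩ := hv_bdd
  have hIcc : Icc 0 T ⊆ Icc (-τ) T := Icc_subset_Icc_left (by linarith)
  have hM : ∀ t ∈ Icc 0 T, ∀ x, u t x - v t x ≤ Mu + Mv := fun t ht x => by
    linarith [(abs_le.1 (hMu t (hIcc ht) x)).2, (abs_le.1 (hMv t (hIcc ht) x)).1]
  have hbefore : ∀ t ∈ Ico (-τ) T, ∀ x, u t x ≤ v t x :=
    forall_Ico_of_delay_step hτ hinit fun t ht hdelay =>
      le_of_delayed_le hg.monotone (hu_cont.mono (prod_mono hIcc subset_rfl))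
        (hv_cont.mono (prod_mono hIcc subset_rfl)) hM hu_reg hv_reg hsub hsup
        (hinit 0 ⟨by linarith, le_rfl⟩) ht hdelay
  intro t ht x
  have hslice : ∀ w : ℝ → EuclideanSpace ℝ (Fin N) → ℝ,
      ContinuousOn (fun p : ℝ × EuclideanSpace ℝ (Fin N) => w p.1 p.2) (Icc (-τ) T ×ˢ univ) →
      ContinuousOn (fun s => w s x) (closure (Ico (-τ) T)) := fun w hw => by
    rw [closure_Ico (by linarith)]
    exact hw.comp (continuous_id.prodMk continuous_const).continuousOn
      fun s hs => ⟨hs, mem_univ x⟩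
  rw [← closure_Ico (by linarith : -τ ≠ T)] at ht
  exact le_on_closure (fun s hs => hbefore s hs x) (hslice u hu_cont) (hslice v hv_cont) ht

/-- Comparison principle for monotone delayed reaction–diffusion equations. -/
theorem stmt_0 {N : ℕ} (hN : 1 ≤ N) (τ T : ℝ) (hτ : 0 < τ) (hT : 0 < T)
    (g : ℝ → ℝ) (hg : StrictMono g) (hgc : Continuous g)
    (u v : ℝ → EuclideanSpace ℝ (Fin N) → ℝ)
    (hu_cont : ContinuousOn (fun p : ℝ × EuclideanSpace ℝ (Fin N) => u p.1 p.2)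
      (Icc (-τ) T ×ˢ univ))
    (hv_cont : ContinuousOn (fun p : ℝ × EuclideanSpace ℝ (Fin N) => v p.1 p.2)
      (Icc (-τ) T ×ˢ univ))
    (hu_bdd : ∃ M, ∀ t ∈ Icc (-τ) T, ∀ x, |u t x| ≤ M)
    (hv_bdd : ∃ M, ∀ t ∈ Icc (-τ) T, ∀ x, |v t x| ≤ M)
    (hu_reg : ∀ t ∈ Ioo 0 T, (∀ x, DifferentiableAt ℝ (fun s => u s x) t) ∧ ContDiff ℝ 2 (u t))
    (hv_reg : ∀ t ∈ Ioo 0 T, (∀ x, DifferentiableAt ℝ (fun s => v s x) t) ∧ ContDiff ℝ 2 (v t))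
    (hsub : ∀ t ∈ Ioo 0 T, ∀ x,
      deriv (fun s => u s x) t - lap (u t) x + u t x - g (u (t - τ) x) ≤ 0)
    (hsup : ∀ t ∈ Ioo 0 T, ∀ x,
      0 ≤ deriv (fun s => v s x) t - lap (v t) x + v t x - g (v (t - τ) x))
    (hinit : ∀ θ ∈ Icc (-τ) 0, ∀ x, u θ x ≤ v θ x) :
    ∀ t ∈ Icc (-τ) T, ∀ x, u t x ≤ v t x :=
  stmt_0_general τ T hτ hT g hg u v hu_cont hv_cont hu_bdd hv_bdd hu_reg hv_reg hsub hsup hinit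
end

section
/- Let τ>0, let g : ℝ → ℝ be increasing and continuous, and let T>0. Let u, v : [−τ,T] → ℝ be continuous functions, differentiable on (0,T), such that u'(t) ≤ g(u(t−τ)) − u(t) and v'(t) ≥ g(v(t−τ)) − v(t) for all t ∈ (0,T). If u(θ) ≤ v(θ) for all θ ∈ [−τ,0], then u(t) ≤ v(t) for all t ∈ [−τ,T]. -/
open Set Filter
open scoped Topology

/-!
Method of steps. If `u ≤ v` is known up to time `a ≥ 0`, then on `[a, a + τ]` the delayed terms
satisfy `g (u (s - τ)) ≤ g (v (s - τ))` because `g` is monotone, so `w = u - v` obeys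
`w' + w ≤ 0` there. Hence `s ↦ exp s * w s` is antitone and `w ≤ 0` persists on `[a, a + τ]`.
Starting from the initial interval and stepping by `τ` covers `[-τ, T]`.
-/

theorem nonpos_of_deriv_add_self_nonpos {f : ℝ → ℝ} {a b : ℝ} (hab : a ≤ b)
    (hf : ContinuousOn f (Icc a b)) (hdiff : ∀ x ∈ Ioo a b, DifferentiableAt ℝ f x)
    (hderiv : ∀ x ∈ Ioo a b, deriv f x + f x ≤ 0) (ha : f a ≤ 0) : f b ≤ 0 := by
  have hF : ∀ x ∈ Ioo a b,
      HasDerivAt (fun y => Real.exp y * f y) (Real.exp x * (deriv f x + f x)) x := by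
    intro x hx
    have := (Real.hasDerivAt_exp x).mul (hdiff x hx).hasDerivAt
    rwa [← mul_add, add_comm] at this
  have hanti : AntitoneOn (fun y => Real.exp y * f y) (Icc a b) := by
    refine antitoneOn_of_deriv_nonpos (convex_Icc a b) (Real.continuous_exp.continuousOn.mul hf)
      ?_ ?_ <;> rw [interior_Icc]
    · exact fun x hx => (hF x hx).differentiableAt.differentiableWithinAt
    · intro x hx
      rw [(hF x hx).deriv]
      exact mul_nonpos_of_nonneg_of_nonpos (Real.exp_pos x).le (hderiv x hx)
  have hexp : Real.exp b * f b ≤ Real.exp a * f a :=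
    hanti ⟨le_rfl, hab⟩ ⟨hab, le_rfl⟩ hab
  have : Real.exp b * f b ≤ 0 :=
    hexp.trans (mul_nonpos_of_nonneg_of_nonpos (Real.exp_pos a).le ha)
  exact nonpos_of_mul_nonpos_right this (Real.exp_pos b)

theorem delay_comparison_step {τ T a : ℝ} {g u v : ℝ → ℝ} (ha : 0 ≤ a)
    (hg : Monotone g)
    (hu_cont : ContinuousOn u (Icc (-τ) T)) (hv_cont : ContinuousOn v (Icc (-τ) T))
    (hu_diff : ∀ t ∈ Ioo 0 T, DifferentiableAt ℝ u t)
    (hv_diff : ∀ t ∈ Ioo 0 T, DifferentiableAt ℝ v t)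
    (hsub : ∀ t ∈ Ioo 0 T, deriv u t ≤ g (u (t - τ)) - u t)
    (hsup : ∀ t ∈ Ioo 0 T, g (v (t - τ)) - v t ≤ deriv v t)
    (hle : ∀ s ∈ Icc (-τ) T, s ≤ a → u s ≤ v s) :
    ∀ t ∈ Icc (-τ) T, t ≤ a + τ → u t ≤ v t := by
  intro t ht hta
  rcases le_or_gt t a with hta' | hat
  · exact hle t ht hta'
  have hsubset : Icc a t ⊆ Icc (-τ) T := Icc_subset_Icc (by linarith) ht.2
  have hIoo : ∀ s ∈ Ioo a t, s ∈ Ioo 0 T := fun s hs => ⟨ha.trans_lt hs.1, hs.2.trans_le ht.2⟩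
  suffices (u - v) t ≤ 0 from sub_nonpos.mp this
  refine nonpos_of_deriv_add_self_nonpos hat.le ((hu_cont.sub hv_cont).mono hsubset)
    (fun s hs => (hu_diff s (hIoo s hs)).sub (hv_diff s (hIoo s hs))) (fun s hs => ?_)
    (sub_nonpos.mpr (hle a (hsubset ⟨le_rfl, hat.le⟩) le_rfl))
  obtain ⟨hs0, hsT⟩ := hIoo s hs
  have hdelay : g (u (s - τ)) ≤ g (v (s - τ)) :=
    hg (hle (s - τ) ⟨by linarith, by linarith⟩ (by linarith [hs.2]))
  rw [deriv_sub (hu_diff s ⟨hs0, hsT⟩) (hv_diff s ⟨hs0, hsT⟩)]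
  simp only [Pi.sub_apply]
  linarith [hsub s ⟨hs0, hsT⟩, hsup s ⟨hs0, hsT⟩]

theorem stmt_1_general (τ T : ℝ) (hτ : 0 < τ)
    (g : ℝ → ℝ) (hg : StrictMono g)
    (u v : ℝ → ℝ)
    (hu_cont : ContinuousOn u (Icc (-τ) T)) (hv_cont : ContinuousOn v (Icc (-τ) T))
    (hu_diff : ∀ t ∈ Ioo 0 T, DifferentiableAt ℝ u t)
    (hv_diff : ∀ t ∈ Ioo 0 T, DifferentiableAt ℝ v t)
    (hsub : ∀ t ∈ Ioo 0 T, deriv u t ≤ g (u (t - τ)) - u t)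
    (hsup : ∀ t ∈ Ioo 0 T, g (v (t - τ)) - v t ≤ deriv v t)
    (hinit : ∀ θ ∈ Icc (-τ) 0, u θ ≤ v θ) :
    ∀ t ∈ Icc (-τ) T, u t ≤ v t := by
  have hsteps : ∀ n : ℕ, ∀ t ∈ Icc (-τ) T, t ≤ n * τ → u t ≤ v t := by
    intro n
    induction n with
    | zero =>
      intro t ht ht0
      exact hinit t ⟨ht.1, by simpa using ht0⟩
    | succ n ih =>
      intro t ht htn
      refine delay_comparison_step (by positivity) hg.monotone hu_cont hv_cont hu_diff
        hv_diff hsub hsup ih t ht ?_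
      push_cast at htn
      linarith
  intro t ht
  obtain ⟨n, hn⟩ := exists_nat_ge (T / τ)
  exact hsteps n t ht (ht.2.trans ((div_le_iff₀ hτ).mp hn))

/-- Comparison principle for the scalar delay differential equation
`v'(t) = g(v(t−τ)) − v(t)` with increasing continuous nonlinearity `g`. -/
theorem stmt_1 (τ T : ℝ) (hτ : 0 < τ) (hT : 0 < T)
    (g : ℝ → ℝ) (hg : StrictMono g) (hgc : Continuous g)
    (u v : ℝ → ℝ)
    (hu_cont : ContinuousOn u (Icc (-τ) T)) (hv_cont : ContinuousOn v (Icc (-τ) T))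
    (hu_diff : ∀ t ∈ Ioo 0 T, DifferentiableAt ℝ u t)
    (hv_diff : ∀ t ∈ Ioo 0 T, DifferentiableAt ℝ v t)
    (hsub : ∀ t ∈ Ioo 0 T, deriv u t ≤ g (u (t - τ)) - u t)
    (hsup : ∀ t ∈ Ioo 0 T, g (v (t - τ)) - v t ≤ deriv v t)
    (hinit : ∀ θ ∈ Icc (-τ) 0, u θ ≤ v θ) :
    ∀ t ∈ Icc (-τ) T, u t ≤ v t :=
  stmt_1_general τ T hτ g hg u v hu_cont hv_cont hu_diff hv_diff hsub hsup hinit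
end

section
/- Let τ>0 and let f : [0,∞) → [0,∞) be a C² function with f(0)=0, f(1)=1, f'(0)>1, f'(1)<1, f'(u)>0 for all u∈(0,1), and f(u)>u for all u∈(0,1). Let φ₀ : [−τ,0] → [0,1] be continuous and not identically 0, and let v : [−τ,∞) → [0,1] be a solution of the delay differential equation v'(t) = f(v(t−τ)) − v(t) for t>0 with v = φ₀ on [−τ,0]. Then v(t) → 1 as t → ∞. -/
open Set Filter
open scoped Topology

/-- `f : [0,∞) → [0,∞)` is a monostable nonlinearity of class `C²`:
`f(0)=0`, `f(1)=1`, `f'(0)>1`, `f'(1)<1`, `f'>0` on `(0,1)` and `f(u)>u` on `(0,1)`. -/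
structure Monostable (f : ℝ → ℝ) : Prop where
  smooth : ContDiffOn ℝ 2 f (Ici 0)
  nonneg : ∀ u, 0 ≤ u → 0 ≤ f u
  map0 : f 0 = 0
  map1 : f 1 = 1
  slope0 : 1 < derivWithin f (Ici 0) 0
  slope1 : derivWithin f (Ici 0) 1 < 1
  derivPos : ∀ u ∈ Ioo (0:ℝ) 1, 0 < derivWithin f (Ici 0) u
  aboveId : ∀ u ∈ Ioo (0:ℝ) 1, u < f u
/-- `v` is a solution of the delay differential equation `v'(t) = F(v(t−τ)) − v(t)`
for `t > 0`, with initial datum `φ` on `[−τ,0]`: `v` is continuous on `[−τ,∞)`,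
agrees with `φ` on `[−τ,0]`, and is differentiable with the prescribed derivative
at every `t > 0`. -/
def IsDDESol (τ : ℝ) (F : ℝ → ℝ) (φ v : ℝ → ℝ) : Prop :=
  ContinuousOn v (Ici (-τ)) ∧ (∀ θ ∈ Icc (-τ) 0, v θ = φ θ) ∧
    ∀ t > (0:ℝ), HasDerivAt v (F (v (t - τ)) - v t) t

/-- Exponential lower bound for a function satisfying `v' ≥ c - v` on `(a,b)`. -/
lemma expLower (v D : ℝ → ℝ) (a b c : ℝ) (hab : a ≤ b)
    (hcont : ContinuousOn v (Icc a b))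
    (hderiv : ∀ s ∈ Ioo a b, HasDerivAt v (D s) s)
    (hD : ∀ s ∈ Ioo a b, c - v s ≤ D s) :
    ∀ t ∈ Icc a b, c + (v a - c) * Real.exp (a - t) ≤ v t := by
  set g : ℝ → ℝ := fun s => (v s - c) * Real.exp s with hg
  have hgc : ContinuousOn g (Icc a b) :=
    (hcont.sub continuousOn_const).mul Real.continuous_exp.continuousOn
  have hgd : ∀ s ∈ Ioo a b,
      HasDerivAt g (D s * Real.exp s + (v s - c) * Real.exp s) s := fun s hs =>
    ((hderiv s hs).sub_const c).mul (Real.hasDerivAt_exp s)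
  have hmono : MonotoneOn g (Icc a b) := by
    apply monotoneOn_of_deriv_nonneg (convex_Icc a b) hgc
    · intro s hs
      rw [interior_Icc] at hs
      exact (hgd s hs).differentiableAt.differentiableWithinAt
    · intro s hs
      rw [interior_Icc] at hs
      rw [(hgd s hs).deriv]
      have h1 := hD s hs
      have h2 := Real.exp_pos s
      nlinarith
  intro t ht
  have h1 : g a ≤ g t := hmono (left_mem_Icc.mpr hab) ht ht.1
  have h2 := mul_le_mul_of_nonneg_right h1 (Real.exp_nonneg (-t))
  have e1 : Real.exp a * Real.exp (-t) = Real.exp (a - t) := by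
    rw [← Real.exp_add]; ring_nf
  have e2 : Real.exp t * Real.exp (-t) = 1 := by
    rw [← Real.exp_add]; simp
  have key : (v a - c) * Real.exp (a - t) ≤ v t - c := by
    calc (v a - c) * Real.exp (a - t) = (v a - c) * Real.exp a * Real.exp (-t) := by
          rw [mul_assoc, e1]
      _ ≤ (v t - c) * Real.exp t * Real.exp (-t) := h2
      _ = (v t - c) * (Real.exp t * Real.exp (-t)) := by ring
      _ = v t - c := by rw [e2, mul_one]
  linarith

/-- Global attractivity of the equilibrium `1` for the monostable delay
differential equation `v'(t) = f(v(t−τ)) − v(t)`. -/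
theorem stmt_7 (τ : ℝ) (hτ : 0 < τ) (f : ℝ → ℝ) (hf : Monostable f)
    (φ : ℝ → ℝ) (hφc : ContinuousOn φ (Icc (-τ) 0))
    (hφr : ∀ θ ∈ Icc (-τ) 0, φ θ ∈ Icc (0:ℝ) 1)
    (hφne : ∃ θ ∈ Icc (-τ) 0, φ θ ≠ 0)
    (v : ℝ → ℝ) (hv : IsDDESol τ f φ v)
    (hvr : ∀ t ≥ -τ, v t ∈ Icc (0:ℝ) 1) :
    Tendsto v atTop (𝓝 1) := by
  obtain ⟨hvcont, hvφ, hvd⟩ := hv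
  have fcont : ContinuousOn f (Ici 0) := hf.smooth.continuousOn
  -- f is monotone on [0,1]
  have fmono : MonotoneOn f (Icc 0 1) := by
    have hsm : StrictMonoOn f (Icc 0 1) := by
      apply strictMonoOn_of_deriv_pos (convex_Icc 0 1)
        (fcont.mono (Icc_subset_Ici_self))
      intro x hx
      rw [interior_Icc] at hx
      have h1 : derivWithin f (Ici 0) x = deriv f x :=
        derivWithin_of_mem_nhds (Ici_mem_nhds hx.1)
      rw [← h1]; exact hf.derivPos x hx
    exact hsm.monotoneOn
  have fge : ∀ u ∈ Icc (0:ℝ) 1, u ≤ f u := by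
    intro u hu
    rcases eq_or_lt_of_le hu.1 with h0 | h0
    · rw [← h0, hf.map0]
    rcases eq_or_lt_of_le hu.2 with h1 | h1
    · rw [h1, hf.map1]
    · exact (hf.aboveId u ⟨h0, h1⟩).le
  have fle1 : ∀ u ∈ Icc (0:ℝ) 1, f u ≤ 1 := by
    intro u hu
    have := fmono hu (right_mem_Icc.mpr (by norm_num)) hu.2
    rwa [hf.map1] at this
  -- the main comparison tool
  have keyLower : ∀ a b c : ℝ, 0 ≤ a → a ≤ b →
      (∀ s ∈ Ioo a b, c ≤ f (v (s - τ))) →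
      ∀ t ∈ Icc a b, c + (v a - c) * Real.exp (a - t) ≤ v t := by
    intro a b c ha hab hc
    apply expLower v (fun s => f (v (s - τ)) - v s) a b c hab
    · exact hvcont.mono (fun x hx => le_trans (by linarith) hx.1)
    · intro s hs
      exact hvd s (lt_of_le_of_lt ha hs.1)
    · intro s hs
      have := hc s hs
      linarith
  -- Step 1: a point b₁ ∈ (0, τ] with v b₁ > 0
  obtain ⟨θ, hθ, hθne⟩ := hφne
  have hφθ : 0 < φ θ := lt_of_le_of_ne (hφr θ hθ).1 (Ne.symm hθne)
  obtain ⟨δ, hδ, hball⟩ := Metric.continuousWithinAt_iff.mp (hφc θ hθ) (φ θ / 2) (by linarith)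
  set δ₂ : ℝ := min (δ/2) (τ/2) with hδ₂def
  have hδ₂ : 0 < δ₂ := lt_min (by linarith) (by linarith)
  have hδ₂δ : δ₂ < δ := lt_of_le_of_lt (min_le_left _ _) (by linarith)
  have hδ₂τ : δ₂ ≤ τ/2 := min_le_right _ _
  have hθτ0 : 0 ≤ θ + τ := by linarith [hθ.1]
  have hθτ : θ + τ ≤ τ := by linarith [hθ.2]
  -- choose the interval [a₁, b₁]
  obtain ⟨a₁, b₁, ha₁, hab₁, hb₁τ, hclose⟩ :
      ∃ a₁ b₁ : ℝ, 0 < a₁ ∧ a₁ < b₁ ∧ b₁ ≤ τ ∧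
        ∀ s ∈ Ioo a₁ b₁, |s - τ - θ| < δ := by
    by_cases hcase : θ + τ ≤ τ/2
    · refine ⟨θ + τ + δ₂/2, θ + τ + δ₂, by linarith, by linarith, by linarith, ?_⟩
      intro s hs
      rw [abs_lt]
      constructor <;> [skip; skip] <;> simp only [mem_Ioo] at hs <;>
        [linarith [hs.1]; linarith [hs.2]]
    · push_neg at hcase
      refine ⟨θ + τ - δ₂, θ + τ, by linarith, by linarith, by linarith, ?_⟩
      intro s hs
      rw [abs_lt]
      constructor <;> simp only [mem_Ioo] at hs <;>
        [linarith [hs.1]; linarith [hs.2]]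
  have hsv : ∀ s ∈ Ioo a₁ b₁, φ θ / 2 ≤ f (v (s - τ)) := by
    intro s hs
    have hsm : s - τ ∈ Icc (-τ) 0 := ⟨by linarith [hs.1], by linarith [hs.2, hb₁τ]⟩
    have hdist : dist (s - τ) θ < δ := by
      rw [Real.dist_eq]; exact hclose s hs
    have hφs := hball hsm hdist
    rw [Real.dist_eq] at hφs
    have hφs2 : φ θ / 2 < φ (s - τ) := by
      have := (abs_lt.mp hφs).1; linarith
    have hvs : v (s - τ) = φ (s - τ) := hvφ _ hsm
    have hvr' := hvr (s - τ) hsm.1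
    have := fge (v (s - τ)) hvr'
    rw [hvs] at *
    linarith
  have hvb₁ : 0 < v b₁ := by
    have h := keyLower a₁ b₁ (φ θ / 2) ha₁.le hab₁.le hsv b₁
      (right_mem_Icc.mpr hab₁.le)
    have he : Real.exp (a₁ - b₁) < 1 := Real.exp_lt_one_iff.mpr (by linarith)
    have hva₁ : 0 ≤ v a₁ := (hvr a₁ (by linarith)).1
    nlinarith [Real.exp_pos (a₁ - b₁)]
  -- Step 2: uniform lower bound c0 on [τ, 2τ]
  set c0 : ℝ := v b₁ * Real.exp (b₁ - 2*τ) with hc0def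
  have hc0pos : 0 < c0 := mul_pos hvb₁ (Real.exp_pos _)
  have hvb₁le : v b₁ ≤ 1 := (hvr b₁ (by linarith)).2
  have hc0le1 : c0 ≤ 1 := by
    have := Real.exp_le_one_iff.mpr (show b₁ - 2*τ ≤ 0 by linarith)
    nlinarith [Real.exp_pos (b₁ - 2*τ)]
  have hbase : ∀ t ∈ Icc τ (2*τ), c0 ≤ v t := by
    intro t ht
    have h := keyLower b₁ (2*τ) 0 (by linarith) (by linarith)
      (fun s hs => hf.nonneg _ (hvr (s - τ) (by
        have := hs.1; simp only [mem_Ioo] at hs; linarith [hs.1])).1)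
      t ⟨by linarith [ht.1], ht.2⟩
    simp only [zero_add, sub_zero] at h
    have he : Real.exp (b₁ - 2*τ) ≤ Real.exp (b₁ - t) :=
      Real.exp_le_exp.mpr (by linarith [ht.2])
    nlinarith [(hvr b₁ (show b₁ ≥ -τ by linarith)).1]
  -- Step 3: propagation lemma
  have prop : ∀ c : ℝ, 0 ≤ c → c ≤ 1 → ∀ T : ℝ, τ ≤ T →
      (∀ t ∈ Icc (T - τ) T, c ≤ v t) → ∀ t, T - τ ≤ t → c ≤ v t := by
    intro c hcn hc1 T hT hb
    have main : ∀ n : ℕ, ∀ t ∈ Icc (T - τ) (T + n * τ), c ≤ v t := by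
      intro n
      induction n with
      | zero => simpa using hb
      | succ n ih =>
        intro t ht
        by_cases htn : t ≤ T + n * τ
        · exact ih t ⟨ht.1, htn⟩
        · push_neg at htn
          have hnτ : (0:ℝ) ≤ n * τ := by positivity
          have ha0 : (0:ℝ) ≤ T + n * τ := by linarith
          have hs : ∀ s ∈ Ioo (T + n * τ) t, c ≤ f (v (s - τ)) := by
            intro s hs
            simp only [mem_Ioo] at hs
            have hsub : s - τ ∈ Icc (T - τ) (T + n * τ) := by
              constructor
              · linarith [hs.1]
              · have := ht.2; push_cast at this ⊢; linarith [hs.2]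
            have hvsub : c ≤ v (s - τ) := ih _ hsub
            have hvm : v (s - τ) ∈ Icc (0:ℝ) 1 := hvr _ (by linarith [hsub.1])
            calc c ≤ f c := fge c ⟨hcn, hc1⟩
              _ ≤ f (v (s - τ)) := fmono ⟨hcn, hc1⟩ hvm hvsub
          have h := keyLower (T + n * τ) t c ha0 htn.le hs t
            (right_mem_Icc.mpr htn.le)
          have hva : c ≤ v (T + n * τ) :=
            ih _ ⟨by linarith, le_refl _⟩
          nlinarith [Real.exp_pos (T + n * τ - t)]
    intro t ht
    obtain ⟨n, hn⟩ := exists_nat_ge ((t - T) / τ)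
    have htn : t ≤ T + n * τ := by
      rw [div_le_iff₀ hτ] at hn; linarith
    exact main n t ⟨ht, htn⟩
  -- the eventual lower bound predicate
  set P : ℝ → Prop := fun c => ∃ T : ℝ, ∀ t ≥ T, c ≤ v t with hPdef
  have hPc0 : P c0 := by
    refine ⟨τ, fun t ht => ?_⟩
    have := prop c0 hc0pos.le hc0le1 (2*τ) (by linarith)
      (fun t ht => hbase t (by rw [show 2*τ - τ = τ by ring] at ht; exact ht))
    exact this t (by linarith)
  -- improvement step
  have improve : ∀ c : ℝ, 0 ≤ c → c ≤ 1 → P c → ∀ ε : ℝ, 0 < ε → P (f c - ε) := by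
    intro c h0 h1 hPc ε hε
    obtain ⟨T, hT⟩ := hPc
    set a : ℝ := max T τ + τ with hadef
    have ha0 : 0 < a := by
      have := le_max_right T τ; linarith
    refine ⟨max a (a - Real.log ε), fun t ht => ?_⟩
    have hta : a ≤ t := le_trans (le_max_left _ _) ht
    have hs : ∀ s ∈ Ioo a t, f c ≤ f (v (s - τ)) := by
      intro s hs
      simp only [mem_Ioo] at hs
      have hsT : T ≤ s - τ := by
        have := le_max_left T τ; linarith [hs.1]
      have hvs : c ≤ v (s - τ) := hT _ hsT
      have hvm : v (s - τ) ∈ Icc (0:ℝ) 1 := hvr _ (by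
        have := le_max_right T τ; linarith [hs.1])
      exact fmono ⟨h0, h1⟩ hvm hvs
    have h := keyLower a t (f c) ha0.le hta hs t (right_mem_Icc.mpr hta)
    have hva0 : 0 ≤ v a := (hvr a (by linarith)).1
    have hfc1 : f c ≤ 1 := fle1 c ⟨h0, h1⟩
    have hexp : Real.exp (a - t) ≤ ε := by
      have htlog : a - Real.log ε ≤ t := le_trans (le_max_right _ _) ht
      calc Real.exp (a - t) ≤ Real.exp (Real.log ε) :=
            Real.exp_le_exp.mpr (by linarith)
        _ = ε := Real.exp_log hε
    nlinarith [Real.exp_pos (a - t)]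
  -- the supremum of eventual lower bounds
  set A : Set ℝ := {c | c ≤ 1 ∧ P c} with hAdef
  have hbdd : BddAbove A := ⟨1, fun c hc => hc.1⟩
  have hc0A : c0 ∈ A := ⟨hc0le1, hPc0⟩
  have hne : A.Nonempty := ⟨c0, hc0A⟩
  set S : ℝ := sSup A with hSdef
  have hS1 : S ≤ 1 := csSup_le hne (fun c hc => hc.1)
  have hSc0 : c0 ≤ S := le_csSup hbdd hc0A
  have hSpos : 0 < S := lt_of_lt_of_le hc0pos hSc0
  have hSeq : S = 1 := by
    by_contra hne1
    have hSlt : S < 1 := lt_of_le_of_ne hS1 hne1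
    have hfS : S < f S := hf.aboveId S ⟨hSpos, hSlt⟩
    set ε : ℝ := (f S - S) / 3 with hεdef
    have hε : 0 < ε := by simp only [hεdef]; linarith
    have hcontS : ContinuousAt f S := fcont.continuousAt (Ici_mem_nhds hSpos)
    obtain ⟨η, hη, hballS⟩ := Metric.continuousAt_iff.mp hcontS ε hε
    have hmin : 0 < min η S := lt_min hη hSpos
    obtain ⟨c, hcA, hclt⟩ := exists_lt_of_lt_csSup hne
      (show S - min η S < S by linarith)
    have hcle : c ≤ S := le_csSup hbdd hcA
    have hcpos : 0 < c := by
      have := min_le_right η S; linarith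
    have hdist : dist c S < η := by
      rw [Real.dist_eq, abs_of_nonpos (by linarith)]
      have := min_le_left η S; linarith
    have hfcl : f S - ε < f c := by
      have := hballS hdist
      rw [Real.dist_eq] at this
      linarith [(abs_lt.mp this).1]
    have hPfc : P (f c - ε) := improve c hcpos.le (le_trans hcle hS1) hcA.2 ε hε
    have hfc1 : f c ≤ 1 := fle1 c ⟨hcpos.le, le_trans hcle hS1⟩
    have hmem : f c - ε ∈ A := ⟨by linarith, hPfc⟩
    have : f c - ε ≤ S := le_csSup hbdd hmem
    simp only [hεdef] at *
    linarith
  -- conclusion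
  rw [Metric.tendsto_atTop]
  intro ε hε
  obtain ⟨c, hcA, hclt⟩ := exists_lt_of_lt_csSup hne
    (show 1 - ε/2 < S by rw [hSeq]; linarith)
  obtain ⟨T, hT⟩ := hcA.2
  refine ⟨max T 0, fun t ht => ?_⟩
  have h2 : c ≤ v t := hT t (le_trans (le_max_left _ _) ht)
  have h3 : v t ≤ 1 := (hvr t (by
    have := le_max_right T 0; linarith)).2
  rw [Real.dist_eq, abs_of_nonpos (by linarith)]
  linarith
end

section
/- Let τ>0 and let f : [0,∞) → [0,∞) be a C² function with f(0)=0, f(1)=1, f'(0)>1, f'(1)<1, f'(u)>0 for all u∈(0,1), and f(u)>u for all u∈(0,1). Then there exist δ₁>0, M>0 and λ>0 such that: for every continuous φ₀ : [−τ,0] → [0,1] with sup_{θ∈[−τ,0]} |1 − φ₀(θ)| ≤ δ₁ and every solution v : [−τ,∞) → [0,1] of the delay differential equation v'(t) = f(v(t−τ)) − v(t) for t>0 with v = φ₀ on [−τ,0], one has sup_{θ∈[−τ,0]} |1 − v(t+θ)| ≤ M·e^{−λt} for all t ≥ 0. -/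
open Set Filter
open scoped Topology

/-- Near the stable equilibrium `1`, the nonlinearity satisfies a linear bound
`1 - f(1-s) ≤ c·s` with contraction constant `c < 1`. -/
lemma monostable_linear_bound (f : ℝ → ℝ) (hf : Monostable f) :
    ∃ c, 0 < c ∧ c < 1 ∧ ∃ δ, 0 < δ ∧ δ < 1 ∧
      ∀ s, 0 ≤ s → s ≤ δ → 1 - f (1 - s) ≤ c * s := by
  set c : ℝ := (max (derivWithin f (Ici 0) 1) 0 + 1) / 2 with hc
  have hmax : max (derivWithin f (Ici 0) 1) 0 < 1 := max_lt hf.slope1 one_pos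
  have hc0 : 0 < c := by
    have : (0:ℝ) ≤ max (derivWithin f (Ici 0) 1) 0 := le_max_right _ _
    simp only [hc]; linarith
  have hc1 : c < 1 := by simp only [hc]; linarith
  have hfc : derivWithin f (Ici 0) 1 < c := by
    have : derivWithin f (Ici 0) 1 ≤ max (derivWithin f (Ici 0) 1) 0 := le_max_left _ _
    simp only [hc]; linarith
  have hdc : ContinuousOn (derivWithin f (Ici 0)) (Ici 0) :=
    hf.smooth.continuousOn_derivWithin (uniqueDiffOn_Ici 0) (by norm_num)
  have h1n : Ici (0:ℝ) ∈ 𝓝 (1:ℝ) := Ici_mem_nhds one_pos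
  have hct : ContinuousAt (derivWithin f (Ici 0)) 1 :=
    (hdc 1 (by norm_num)).continuousAt h1n
  have hev : ∀ᶠ x in 𝓝 (1:ℝ), derivWithin f (Ici 0) x < c :=
    hct.tendsto (Iio_mem_nhds hfc)
  obtain ⟨r, hr0, hr⟩ := Metric.eventually_nhds_iff.mp hev
  refine ⟨c, hc0, hc1, min r 1 / 2, by positivity, by
      have := min_le_right r 1; linarith, ?_⟩
  intro s hs0 hsd
  rcases eq_or_lt_of_le hs0 with h|h
  · simp [← h, hf.map1]
  · have hδr : min r 1 / 2 ≤ r := by have := min_le_left r 1; linarith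
    have hδ1 : min r 1 / 2 ≤ 1/2 := by have := min_le_right r 1; linarith
    have hab : 1 - s < 1 := by linarith
    have hsub : Icc (1-s) 1 ⊆ Ici (0:ℝ) := fun x hx => by
      simp only [mem_Icc] at hx; simp only [mem_Ici]; linarith
    have hcont : ContinuousOn f (Icc (1-s) 1) :=
      hf.smooth.continuousOn.mono hsub
    have hdiff : DifferentiableOn ℝ f (Ioo (1-s) 1) := by
      intro x hx
      simp only [mem_Ioo] at hx
      have hx0 : 0 < x := by linarith
      have : DifferentiableAt ℝ f x :=
        ((hf.smooth.differentiableOn (by norm_num)) x (le_of_lt hx0)).differentiableAt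
          (Ici_mem_nhds hx0)
      exact this.differentiableWithinAt
    obtain ⟨ξ, hξ, hξd⟩ := exists_deriv_eq_slope f hab hcont hdiff
    simp only [mem_Ioo] at hξ
    have hξ0 : 0 < ξ := by linarith
    have heq : derivWithin f (Ici 0) ξ = deriv f ξ :=
      derivWithin_of_mem_nhds (Ici_mem_nhds hξ0)
    have hdist : dist ξ 1 < r := by
      rw [Real.dist_eq, abs_of_nonpos (by linarith)]
      linarith
    have hlt : deriv f ξ < c := heq ▸ hr hdist
    rw [hξd] at hlt
    have hthis : (f 1 - f (1 - s)) / (1 - (1 - s)) < c := hlt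
    rw [hf.map1] at hthis
    have h1s : 1 - (1 - s) = s := by ring
    rw [h1s, div_lt_iff₀ h] at hthis
    linarith

set_option maxHeartbeats 1000000

/-- Exponential local stability of the equilibrium `1` for the monostable delay
differential equation `v'(t) = f(v(t−τ)) − v(t)`. -/
theorem stmt_8 (τ : ℝ) (hτ : 0 < τ) (f : ℝ → ℝ) (hf : Monostable f) :
    ∃ δ₁ > (0:ℝ), ∃ M > (0:ℝ), ∃ lam > (0:ℝ), ∀ φ v : ℝ → ℝ,
      ContinuousOn φ (Icc (-τ) 0) → (∀ θ ∈ Icc (-τ) 0, φ θ ∈ Icc (0:ℝ) 1) →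
      (∀ θ ∈ Icc (-τ) 0, |1 - φ θ| ≤ δ₁) →
      IsDDESol τ f φ v → (∀ t ≥ -τ, v t ∈ Icc (0:ℝ) 1) →
      ∀ t ≥ (0:ℝ), ∀ θ ∈ Icc (-τ) 0, |1 - v (t + θ)| ≤ M * Real.exp (-lam * t) := by
  obtain ⟨c, hc0, hc1, δ, hδ0, hδ1, hg⟩ := monostable_linear_bound f hf
  obtain ⟨lam, hlam0, hlam⟩ : ∃ lam > (0:ℝ), lam + c * Real.exp (lam * τ) < 1 := by
    have hcont : ContinuousAt (fun l : ℝ => l + c * Real.exp (l * τ)) 0 := by fun_prop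
    have h0 : (0:ℝ) + c * Real.exp (0 * τ) < 1 := by simp [hc1]
    have hev : ∀ᶠ l in 𝓝 (0:ℝ), l + c * Real.exp (l * τ) < 1 :=
      hcont.tendsto (Iio_mem_nhds h0)
    have hev' : ∀ᶠ l in 𝓝[>] (0:ℝ), l + c * Real.exp (l * τ) < 1 :=
      hev.filter_mono nhdsWithin_le_nhds
    obtain ⟨l, hl1, hl2⟩ := (hev'.and self_mem_nhdsWithin).exists
    exact ⟨l, hl2, hl1⟩
  set E := Real.exp (lam * τ) with hE
  have hE0 : 0 < E := Real.exp_pos _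
  have hE1 : 1 ≤ E := Real.one_le_exp (by positivity)
  set δ₁ := δ / (4 * E) with hδ₁def
  have hδ₁0 : 0 < δ₁ := by positivity
  refine ⟨δ₁, hδ₁0, δ₁ * E, by positivity, lam, hlam0, ?_⟩
  intro φ v hφc hφmem hφδ hsol hv01
  obtain ⟨hvc, hvφ, hvd⟩ := hsol
  -- Main barrier estimate with a safety margin ε.
  have main : ∀ ε, 0 < ε → ε ≤ δ₁ → ∀ t, -τ ≤ t →
      1 - v t ≤ (δ₁ + ε) * Real.exp (-lam * t) := by
    intro ε hε0 hεδ
    by_contra hcon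
    push_neg at hcon
    obtain ⟨t₁, ht₁, hbad⟩ := hcon
    set S := {t : ℝ | -τ ≤ t ∧ (δ₁ + ε) * Real.exp (-lam * t) < 1 - v t} with hS
    have hSne : S.Nonempty := ⟨t₁, ht₁, hbad⟩
    have hSbd : BddBelow S := ⟨-τ, fun x hx => hx.1⟩
    set t₀ := sInf S with ht₀def
    have hinit : ∀ s, -τ ≤ s → s ≤ 0 → 1 - v s ≤ δ₁ := by
      intro s h1 h2
      rw [hvφ s ⟨h1, h2⟩]
      calc 1 - φ s ≤ |1 - φ s| := le_abs_self _
        _ ≤ δ₁ := hφδ s ⟨h1, h2⟩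
    have hnotS : ∀ s, s ≤ 0 → s ∉ S := by
      intro s hs hsS
      have h1 : 1 - v s ≤ δ₁ := hinit s hsS.1 hs
      have h2 : (1:ℝ) ≤ Real.exp (-lam * s) := Real.one_le_exp (by nlinarith)
      have h3 := hsS.2
      nlinarith
    have ht₀0 : 0 ≤ t₀ := le_csInf hSne (fun x hx => by
      by_contra h; push_neg at h; exact hnotS x h.le hx)
    have ht₀τ : -τ < t₀ := by linarith
    have hvct : ContinuousAt v t₀ :=
      (hvc t₀ (by simp only [mem_Ici]; linarith)).continuousAt (Ici_mem_nhds ht₀τ)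
    have hexpc : Continuous fun t : ℝ => (δ₁ + ε) * Real.exp (-lam * t) := by continuity
    have hψct : ContinuousAt
        (fun t => (1 - v t) - (δ₁ + ε) * Real.exp (-lam * t)) t₀ :=
      (continuousAt_const.sub hvct).sub hexpc.continuousAt
    have hψge : 0 ≤ (1 - v t₀) - (δ₁ + ε) * Real.exp (-lam * t₀) := by
      by_contra h; push_neg at h
      have hev : ∀ᶠ x in 𝓝 t₀, (1 - v x) - (δ₁ + ε) * Real.exp (-lam * x) < 0 :=
        hψct.tendsto (Iio_mem_nhds h)
      obtain ⟨r, hr0, hr⟩ := Metric.eventually_nhds_iff.mp hev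
      obtain ⟨s, hsS, hslt⟩ := exists_lt_of_csInf_lt hSne (show sInf S < t₀ + r by
        rw [← ht₀def]; linarith)
      have hsge : t₀ ≤ s := csInf_le hSbd hsS
      have hd : dist s t₀ < r := by
        rw [Real.dist_eq, abs_of_nonneg (by linarith)]; linarith
      have := hr hd
      have := hsS.2
      linarith
    have ht₀pos : 0 < t₀ := by
      rcases eq_or_lt_of_le ht₀0 with h|h
      · exfalso
        have h1 : 1 - v t₀ ≤ δ₁ := hinit t₀ (by linarith) (by linarith)
        have h2 : Real.exp (-lam * t₀) = 1 := by rw [← h]; simp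
        rw [h2] at hψge; linarith
      · exact h
    have hbelow : ∀ s, -τ ≤ s → s < t₀ →
        1 - v s ≤ (δ₁ + ε) * Real.exp (-lam * s) := by
      intro s h1 h2
      by_contra h; push_neg at h
      exact absurd (csInf_le hSbd ⟨h1, h⟩) (not_le.mpr h2)
    have hψle : (1 - v t₀) - (δ₁ + ε) * Real.exp (-lam * t₀) ≤ 0 := by
      have htd : Tendsto (fun t => (1 - v t) - (δ₁ + ε) * Real.exp (-lam * t)) (𝓝[<] t₀)
          (𝓝 ((1 - v t₀) - (δ₁ + ε) * Real.exp (-lam * t₀))) :=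
        hψct.tendsto.mono_left nhdsWithin_le_nhds
      refine le_of_tendsto htd ?_
      filter_upwards [Ioo_mem_nhdsLT_of_mem
        (show t₀ ∈ Ioc (-τ) t₀ from ⟨ht₀τ, le_refl _⟩)] with s hs
      have := hbelow s hs.1.le hs.2; linarith
    have hψ0 : 1 - v t₀ = (δ₁ + ε) * Real.exp (-lam * t₀) := by linarith
    -- the derivative of the barrier-deficit function at the first touching time
    have hvd₀ := hvd t₀ ht₀pos
    set B := (δ₁ + ε) * Real.exp (-lam * t₀) with hB
    have hB0 : 0 < B := by positivity
    have hwτle : 1 - v (t₀ - τ) ≤ (δ₁ + ε) * Real.exp (-lam * (t₀ - τ)) :=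
      hbelow (t₀ - τ) (by linarith) (by linarith)
    have hexp : Real.exp (-lam * (t₀ - τ)) = E * Real.exp (-lam * t₀) := by
      rw [hE, ← Real.exp_add]; congr 1; ring
    have hwEB : 1 - v (t₀ - τ) ≤ E * B := by
      rw [hexp] at hwτle
      calc 1 - v (t₀ - τ) ≤ (δ₁ + ε) * (E * Real.exp (-lam * t₀)) := hwτle
        _ = E * B := by rw [hB]; ring
    have hw0 : 0 ≤ 1 - v (t₀ - τ) := by
      have := (hv01 (t₀ - τ) (by linarith)).2; linarith
    have hexp1 : Real.exp (-lam * t₀) ≤ 1 :=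
      Real.exp_le_one_iff.mpr (by nlinarith)
    have hwδ : 1 - v (t₀ - τ) ≤ δ := by
      have h1 : E * B = (δ₁ + ε) * E * Real.exp (-lam * t₀) := by rw [hB]; ring
      have h2 : (δ₁ + ε) * E * Real.exp (-lam * t₀) ≤ (δ₁ + ε) * E * 1 :=
        mul_le_mul_of_nonneg_left hexp1 (by positivity)
      rw [mul_one] at h2
      have h3 : (δ₁ + ε) * E ≤ 2 * δ₁ * E :=
        mul_le_mul_of_nonneg_right (by linarith) hE0.le
      have h4 : 2 * δ₁ * E = δ / 2 := by
        rw [hδ₁def]; field_simp; ring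
      linarith [hwEB]
    have hfb : 1 - f (v (t₀ - τ)) ≤ c * (1 - v (t₀ - τ)) := by
      have h := hg (1 - v (t₀ - τ)) hw0 hwδ
      rwa [sub_sub_cancel] at h
    have hF : 1 - c * (E * B) ≤ f (v (t₀ - τ)) := by
      have := mul_le_mul_of_nonneg_left hwEB hc0.le
      linarith
    have hde : HasDerivAt (fun t => Real.exp (-lam * t))
        (Real.exp (-lam * t₀) * -lam) t₀ := by
      have h1 : HasDerivAt (fun t : ℝ => -lam * t) (-lam) t₀ := by
        simpa using (hasDerivAt_id t₀).const_mul (-lam)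
      exact h1.exp
    have hψd : HasDerivAt (fun t => (1 - v t) - (δ₁ + ε) * Real.exp (-lam * t))
        (-(f (v (t₀ - τ)) - v t₀) - (δ₁ + ε) * (Real.exp (-lam * t₀) * -lam)) t₀ :=
      (hvd₀.const_sub 1).sub (hde.const_mul (δ₁ + ε))
    have hveq : v t₀ = 1 - B := by rw [hB]; linarith
    have hDneg : -(f (v (t₀ - τ)) - v t₀) - (δ₁ + ε) * (Real.exp (-lam * t₀) * -lam) < 0 := by
      have hDeq : -(f (v (t₀ - τ)) - v t₀) - (δ₁ + ε) * (Real.exp (-lam * t₀) * -lam)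
          = (1 - B) - f (v (t₀ - τ)) + lam * B := by
        rw [hveq, hB]; ring
      rw [hDeq]
      nlinarith [hF, mul_lt_mul_of_pos_left hlam hB0]
    -- contradiction: the deficit is ≤ 0 to the left of t₀ and = 0 at t₀,
    -- so its derivative there must be ≥ 0
    have hslope : Tendsto (slope (fun t => (1 - v t) - (δ₁ + ε) * Real.exp (-lam * t)) t₀)
        (𝓝[≠] t₀) (𝓝 (-(f (v (t₀ - τ)) - v t₀) - (δ₁ + ε) * (Real.exp (-lam * t₀) * -lam))) :=
      hasDerivAt_iff_tendsto_slope.mp hψd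
    have hmono : 𝓝[<] t₀ ≤ 𝓝[≠] t₀ := nhdsWithin_mono _ (fun x hx => ne_of_lt hx)
    have hev2 : ∀ᶠ s in 𝓝[<] t₀,
        slope (fun t => (1 - v t) - (δ₁ + ε) * Real.exp (-lam * t)) t₀ s < 0 :=
      (hslope.mono_left hmono).eventually_lt_const hDneg
    have hev3 : ∀ᶠ s in 𝓝[<] t₀, s ∈ Ioo (-τ) t₀ :=
      eventually_of_mem (Ioo_mem_nhdsLT_of_mem ⟨ht₀τ, le_refl t₀⟩) (fun x hx => hx)
    obtain ⟨s, hs1, hs2⟩ := (hev2.and hev3).exists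
    have hψs : (1 - v s) - (δ₁ + ε) * Real.exp (-lam * s) ≤ 0 := by
      have := hbelow s hs2.1.le hs2.2; linarith
    have hst : s - t₀ < 0 := by linarith [hs2.2]
    have hslopeval : slope (fun t => (1 - v t) - (δ₁ + ε) * Real.exp (-lam * t)) t₀ s
        = (((1 - v s) - (δ₁ + ε) * Real.exp (-lam * s)) -
           ((1 - v t₀) - (δ₁ + ε) * Real.exp (-lam * t₀))) / (s - t₀) := by
      simp [slope_def_field]
    have hψt₀ : (1 - v t₀) - (δ₁ + ε) * Real.exp (-lam * t₀) = 0 := by linarith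
    rw [hslopeval, hψt₀, sub_zero] at hs1
    have : 0 ≤ ((1 - v s) - (δ₁ + ε) * Real.exp (-lam * s)) / (s - t₀) :=
      div_nonneg_iff.mpr (Or.inr ⟨hψs, hst.le⟩)
    linarith
  -- Pass to the limit ε → 0.
  have final : ∀ t, -τ ≤ t → 1 - v t ≤ δ₁ * Real.exp (-lam * t) := by
    intro t ht
    refine le_of_forall_pos_le_add ?_
    intro ε' hε'
    set ε := min δ₁ (ε' / E) with hεdef
    have hε0 : 0 < ε := lt_min hδ₁0 (by positivity)
    have hm := main ε hε0 (min_le_left _ _) t ht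
    have hexple : Real.exp (-lam * t) ≤ E := by
      rw [hE]; exact Real.exp_le_exp.mpr (by nlinarith)
    have h1 : ε * Real.exp (-lam * t) ≤ (ε' / E) * E :=
      mul_le_mul (min_le_right _ _) hexple (Real.exp_pos _).le (by positivity)
    have h2 : (ε' / E) * E = ε' := by field_simp
    nlinarith [hm]
  intro t ht θ hθ
  have h1 : -τ ≤ t + θ := by have := hθ.1; linarith
  have habs : |1 - v (t + θ)| = 1 - v (t + θ) :=
    abs_of_nonneg (by have := (hv01 (t + θ) h1).2; linarith)
  rw [habs]
  have h2 := final (t + θ) h1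
  have h3 : Real.exp (-lam * (t + θ)) ≤ E * Real.exp (-lam * t) := by
    rw [show -lam * (t + θ) = lam * (-θ) + -lam * t by ring, Real.exp_add, hE]
    have hle : Real.exp (lam * (-θ)) ≤ Real.exp (lam * τ) :=
      Real.exp_le_exp.mpr (by nlinarith [hθ.1])
    nlinarith [Real.exp_pos (-lam * t)]
  calc 1 - v (t + θ) ≤ δ₁ * Real.exp (-lam * (t + θ)) := h2
    _ ≤ δ₁ * E * Real.exp (-lam * t) := by nlinarith [hδ₁0]
end

section
/- Let τ>0 and a ∈ [0,1). Then every complex number λ satisfying λ + 1 = a·e^{−λτ} has strictly negative real part: Re(λ) < 0. -/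
open Set

/-! If `Re λ ≥ 0`, the left side `λ + 1` has modulus at least `1`, while the right side
`a·e^{−λτ}` has modulus `a·e^{−τ Re λ} ≤ a < 1`. -/

namespace Complex

lemma one_le_norm_add_one_of_nonneg_re {z : ℂ} (hz : 0 ≤ z.re) : 1 ≤ ‖z + 1‖ :=
  calc (1 : ℝ) ≤ (z + 1).re := by simp only [add_re, one_re]; linarith
    _ ≤ ‖z + 1‖ := re_le_norm _

lemma norm_exp_neg_mul_ofReal_le_one {z : ℂ} {τ : ℝ} (hz : 0 ≤ z.re) (hτ : 0 ≤ τ) :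
    ‖exp (-z * τ)‖ ≤ 1 := by
  rw [norm_exp, Real.exp_le_one_iff, mul_re, ofReal_re, ofReal_im, mul_zero, sub_zero, neg_re]
  exact mul_nonpos_of_nonpos_of_nonneg (neg_nonpos.2 hz) hτ

theorem re_neg_of_add_one_eq_mul_exp {z a : ℂ} {τ : ℝ} (ha : ‖a‖ < 1) (hτ : 0 ≤ τ)
    (hz : z + 1 = a * exp (-z * τ)) : z.re < 0 := by
  by_contra! hre
  have hlhs := one_le_norm_add_one_of_nonneg_re hre
  have hrhs : ‖a * exp (-z * τ)‖ < 1 :=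
    calc ‖a * exp (-z * τ)‖ = ‖a‖ * ‖exp (-z * τ)‖ := norm_mul _ _
      _ ≤ ‖a‖ := mul_le_of_le_one_right (norm_nonneg a) (norm_exp_neg_mul_ofReal_le_one hre hτ)
      _ < 1 := ha
  rw [hz] at hlhs
  linarith

end Complex

/-- All roots of the characteristic equation `λ + 1 = a·e^{−λτ}`, with `τ > 0`
and `a ∈ [0,1)`, have strictly negative real part. -/
theorem stmt_9 (τ a : ℝ) (hτ : 0 < τ) (ha : a ∈ Ico (0:ℝ) 1)
    (z : ℂ) (hz : z + 1 = (a : ℂ) * Complex.exp (-z * (τ : ℂ))) : z.re < 0 := by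
  have ha_norm : ‖(a : ℂ)‖ < 1 := by
    rw [Complex.norm_real, Real.norm_of_nonneg ha.1]
    exact ha.2
  exact Complex.re_neg_of_add_one_eq_mul_exp ha_norm hτ.le hz
end

section
/- Let τ>0, Ñ>1, A>0 and γ>0. Then there exist K̂>0 and γ̂>0, depending only on τ, Ñ, A and γ, such that: for every continuous b : [0,∞) → ℝ with 0 ≤ b(t) ≤ Ñ for all t ≥ 0, for every continuous w₁ : [−τ,∞) → ℝ differentiable on (0,∞) with w₁ ≡ 1 on [−τ,0] and w₁'(t) = b(t)·w₁(t−τ) − w₁(t) for t>0, and for every continuous w₂ : [−τ,∞) → ℝ differentiable on (0,∞) with w₂ ≡ 0 on [−τ,0] and w₂'(t) = b(t)·w₂(t−τ) − w₂(t) + g(t) for t>0 where g is continuous with |g(t)| ≤ A·e^{2γt}, one has |w₂(t+θ)| ≤ K̂·e^{γ̂ t}·w₁(t+θ) for all t ≥ 0 and all θ∈[−τ,0]. -/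
/-!
Both estimates rest on the integrating factor `e^t`: a solution of `x' = G - x` satisfies
`(e^t x)' = e^t G`, so `e^t x` is nondecreasing where `G ≥ 0`, and `|x|` stays below any level
`M` that bounds `|x|` initially and `|G|` throughout. The delay is handled by the method of
steps: a bound on `[-τ, t - τ]` controls the forcing on `[0, t]`.

For `w₁` the forcing `b·w₁(· - τ)` is nonnegative, so `e^t w₁(t) ≥ w₁(0) = 1`. For `w₂` the
function `F(t) = 2A e^{ct}`, with `c ≥ 2γ` and `e^{cτ} ≥ 2Ñ`, dominates the forcing:
`Ñ F(s - τ) + A e^{cs} ≤ F(s) ≤ F(t)` for `s ≤ t`. Hence `|w₂| ≤ F`, and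
`|w₂(t + θ)| ≤ 2A e^{ct} ≤ 2A e^{(c+1)t} w₁(t + θ)`.
-/

open Set Real

theorem forall_ge_of_delay_induction {τ : ℝ} (hτ : 0 < τ) {P : ℝ → Prop}
    (h : ∀ t ≥ -τ, (∀ s ∈ Icc (-τ) (t - τ), P s) → P t) : ∀ t ≥ -τ, P t := by
  have hsteps : ∀ n : ℕ, ∀ t ∈ Ico (-τ) (n * τ - τ), P t := by
    intro n
    induction n with
    | zero =>
      intro t ht
      simp only [Nat.cast_zero, zero_mul, zero_sub, mem_Ico] at ht
      linarith [ht.1, ht.2]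
    | succ n ih =>
      intro t ht
      refine h t ht.1 fun s hs => ih s ⟨hs.1, ?_⟩
      have := ht.2
      push_cast at this
      linarith [hs.2]
  intro t ht
  obtain ⟨n, hn⟩ := exists_nat_gt ((t + τ) / τ + 1)
  refine hsteps n t ⟨ht, ?_⟩
  have : (t + τ) / τ * τ = t + τ := div_mul_cancel₀ _ hτ.ne'
  nlinarith

theorem exp_mul_le_of_hasDerivAt_sub_self {x G : ℝ → ℝ} {a b : ℝ} (hab : a ≤ b)
    (hx : ContinuousOn x (Icc a b)) (hx' : ∀ s ∈ Ioo a b, HasDerivAt x (G s - x s) s)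
    (hG : ∀ s ∈ Ioo a b, 0 ≤ G s) : exp a * x a ≤ exp b * x b := by
  have hmono : MonotoneOn (fun s => exp s * x s) (Icc a b) := by
    refine monotoneOn_of_hasDerivWithinAt_nonneg (f' := fun s => exp s * G s) (convex_Icc a b)
      (continuousOn_exp.mul hx) (fun s hs => ?_) (fun s hs => ?_) <;> rw [interior_Icc] at hs
    · exact (((hasDerivAt_exp s).mul (hx' s hs)).congr_deriv (by ring)).hasDerivWithinAt
    · exact mul_nonneg (exp_pos s).le (hG s hs)
  exact hmono (left_mem_Icc.2 hab) (right_mem_Icc.2 hab) hab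

theorem abs_le_of_hasDerivAt_sub_self {x G : ℝ → ℝ} {a b M : ℝ} (hab : a ≤ b)
    (hx : ContinuousOn x (Icc a b)) (hx' : ∀ s ∈ Ioo a b, HasDerivAt x (G s - x s) s)
    (hG : ∀ s ∈ Ioo a b, |G s| ≤ M) (ha : |x a| ≤ M) : |x b| ≤ M := by
  have upper := exp_mul_le_of_hasDerivAt_sub_self (x := fun s => M - x s)
    (G := fun s => M - G s) hab (continuousOn_const.sub hx)
    (fun s hs => ((hx' s hs).const_sub M).congr_deriv (by ring))
    (fun s hs => by linarith [(abs_le.1 (hG s hs)).2])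
  have lower := exp_mul_le_of_hasDerivAt_sub_self (x := fun s => M + x s)
    (G := fun s => M + G s) hab (continuousOn_const.add hx)
    (fun s hs => ((hx' s hs).const_add M).congr_deriv (by ring))
    (fun s hs => by linarith [(abs_le.1 (hG s hs)).1])
  have hupper : 0 ≤ exp b * (M - x b) :=
    (mul_nonneg (exp_pos a).le (by linarith [(abs_le.1 ha).2])).trans upper
  have hlower : 0 ≤ exp b * (M + x b) :=
    (mul_nonneg (exp_pos a).le (by linarith [(abs_le.1 ha).1])).trans lower
  rw [mul_nonneg_iff_of_pos_left (exp_pos b)] at hupper hlower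
  exact abs_le.2 ⟨by linarith, by linarith⟩

section DelayEquation

variable {τ : ℝ} {b w : ℝ → ℝ}

theorem exp_neg_le_of_linearDelay (hτ : 0 < τ) (hb : ∀ t ≥ 0, 0 ≤ b t)
    (hw : ContinuousOn w (Ici (-τ))) (hw0 : ∀ θ ∈ Icc (-τ) 0, w θ = 1)
    (hw' : ∀ t > 0, HasDerivAt w (b t * w (t - τ) - w t) t) :
    ∀ t ≥ 0, exp (-t) ≤ w t := by
  have step : ∀ t ≥ 0, (∀ s ∈ Icc (-τ) (t - τ), 0 ≤ w s) → exp (-t) ≤ w t := by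
    intro t ht hnonneg
    have h := exp_mul_le_of_hasDerivAt_sub_self (G := fun s => b s * w (s - τ)) ht
      (hw.mono fun s hs => by simp only [mem_Ici]; linarith [hs.1]) (fun s hs => hw' s hs.1)
      (fun s hs => mul_nonneg (hb s hs.1.le)
        (hnonneg (s - τ) ⟨by linarith [hs.1], by linarith [hs.2]⟩))
    rw [hw0 0 ⟨by linarith, le_rfl⟩, exp_zero, mul_one] at h
    calc exp (-t) = exp (-t) * 1 := (mul_one _).symm
      _ ≤ exp (-t) * (exp t * w t) := by gcongr
      _ = w t := by rw [← mul_assoc, ← exp_add, neg_add_cancel, exp_zero, one_mul]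
  have hnonneg : ∀ t ≥ -τ, 0 ≤ w t := forall_ge_of_delay_induction hτ fun t ht ih => by
    rcases le_or_gt t 0 with h | h
    · rw [hw0 t ⟨ht, h⟩]
      exact zero_le_one
    · exact (exp_pos _).le.trans (step t h.le ih)
  exact fun t ht => step t ht fun s hs => hnonneg s hs.1

theorem abs_le_of_linearDelay_forced {N A c : ℝ} {g : ℝ → ℝ} (hτ : 0 < τ) (hA : 0 ≤ A)
    (hc : 0 ≤ c) (hN : 2 * N ≤ exp (c * τ)) (hb : ∀ t ≥ 0, b t ∈ Icc 0 N)
    (hg : ∀ t ≥ 0, |g t| ≤ A * exp (c * t)) (hw : ContinuousOn w (Ici (-τ)))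
    (hw0 : ∀ θ ∈ Icc (-τ) 0, w θ = 0)
    (hw' : ∀ t > 0, HasDerivAt w (b t * w (t - τ) - w t + g t) t) :
    ∀ t ≥ -τ, |w t| ≤ 2 * A * exp (c * t) := by
  refine forall_ge_of_delay_induction hτ fun t ht ih => ?_
  rcases le_or_gt t 0 with h | h
  · rw [hw0 t ⟨ht, h⟩, abs_zero]
    positivity
  refine abs_le_of_hasDerivAt_sub_self (G := fun s => b s * w (s - τ) + g s) h.le
    (hw.mono fun s hs => by simp only [mem_Ici]; linarith [hs.1])
    (fun s hs => (hw' s hs.1).congr_deriv (by ring)) (fun s hs => ?_)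
    (by rw [hw0 0 ⟨by linarith, le_rfl⟩, abs_zero]; positivity)
  obtain ⟨hb0, hbN⟩ := hb s hs.1.le
  have hdelay : |w (s - τ)| ≤ 2 * A * exp (c * (s - τ)) :=
    ih (s - τ) ⟨by linarith [hs.1], by linarith [hs.2]⟩
  have hshift : exp (c * s) = exp (c * (s - τ)) * exp (c * τ) := by
    rw [← exp_add]
    ring_nf
  have hdelay_term : |b s * w (s - τ)| ≤ A * exp (c * s) := by
    rw [abs_mul, abs_of_nonneg hb0, hshift]
    calc b s * |w (s - τ)| ≤ N * (2 * A * exp (c * (s - τ))) := by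
          gcongr
          linarith
      _ = 2 * N * (A * exp (c * (s - τ))) := by ring
      _ ≤ exp (c * τ) * (A * exp (c * (s - τ))) := by gcongr
      _ = A * (exp (c * (s - τ)) * exp (c * τ)) := by ring
  have hmono : exp (c * s) ≤ exp (c * t) := exp_le_exp.2 (by nlinarith [hs.2])
  calc |b s * w (s - τ) + g s| ≤ |b s * w (s - τ)| + |g s| := abs_add_le _ _
    _ ≤ A * exp (c * s) + A * exp (c * s) := add_le_add hdelay_term (hg s hs.1.le)
    _ ≤ 2 * A * exp (c * t) := by nlinarith

end DelayEquation

theorem stmt_13_general (τ Nt A γ : ℝ) (hτ : 0 < τ) (hNt : 1 < Nt) (hA : 0 < A) :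
    ∃ Khat > (0:ℝ), ∃ γhat > (0:ℝ), ∀ b g w₁ w₂ : ℝ → ℝ,
      ContinuousOn b (Ici 0) → (∀ t ≥ (0:ℝ), b t ∈ Icc (0:ℝ) Nt) →
      ContinuousOn w₁ (Ici (-τ)) → (∀ t ∈ Ioi (0:ℝ), DifferentiableAt ℝ w₁ t) →
      (∀ θ ∈ Icc (-τ) 0, w₁ θ = 1) →
      (∀ t > (0:ℝ), HasDerivAt w₁ (b t * w₁ (t - τ) - w₁ t) t) →
      ContinuousOn g (Ici 0) → (∀ t ≥ (0:ℝ), |g t| ≤ A * Real.exp (2 * γ * t)) →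
      ContinuousOn w₂ (Ici (-τ)) → (∀ t ∈ Ioi (0:ℝ), DifferentiableAt ℝ w₂ t) →
      (∀ θ ∈ Icc (-τ) 0, w₂ θ = 0) →
      (∀ t > (0:ℝ), HasDerivAt w₂ (b t * w₂ (t - τ) - w₂ t + g t) t) →
      ∀ t ≥ (0:ℝ), ∀ θ ∈ Icc (-τ) 0,
        |w₂ (t + θ)| ≤ Khat * Real.exp (γhat * t) * w₁ (t + θ) := by
  set c := max (2 * γ) (log (2 * Nt) / τ)
  have hc : 0 < c := (div_pos (log_pos (by linarith)) hτ).trans_le (le_max_right _ _)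
  have hcN : 2 * Nt ≤ exp (c * τ) :=
    calc 2 * Nt = exp (log (2 * Nt) / τ * τ) := by
          rw [div_mul_cancel₀ _ hτ.ne', exp_log (by linarith)]
      _ ≤ exp (c * τ) := by gcongr; exact le_max_right _ _
  refine ⟨2 * A, by positivity, c + 1, by positivity, ?_⟩
  intro b g w₁ w₂ _ hb hw₁ _ hw₁0 hw₁' _ hg hw₂ _ hw₂0 hw₂' t ht θ hθ
  have hw₂_le := abs_le_of_linearDelay_forced hτ hA.le hc.le hcN hb
    (fun s hs => (hg s hs).trans (by gcongr; exact le_max_left _ _)) hw₂ hw₂0 hw₂'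
    (t + θ) (by linarith [hθ.1])
  have hw₁_ge : exp (-t) ≤ w₁ (t + θ) := by
    rcases le_or_gt 0 (t + θ) with h | h
    · exact (exp_le_exp.2 (by linarith [hθ.2])).trans
        (exp_neg_le_of_linearDelay hτ (fun s hs => (hb s hs).1) hw₁ hw₁0 hw₁' _ h)
    · rw [hw₁0 _ ⟨by linarith [hθ.1], h.le⟩]
      exact exp_le_one_iff.2 (by linarith)
  calc |w₂ (t + θ)| ≤ 2 * A * exp (c * (t + θ)) := hw₂_le
    _ ≤ 2 * A * exp (c * t) := by gcongr; nlinarith [hθ.2]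
    _ = 2 * A * exp ((c + 1) * t) * exp (-t) := by
        rw [mul_assoc _ (exp _), ← exp_add]
        ring_nf
    _ ≤ 2 * A * exp ((c + 1) * t) * w₁ (t + θ) := by gcongr

/-- Comparison of the solution of the inhomogeneous linearized delay differential
equation (zero datum, exponentially bounded forcing) with the solution of the
homogeneous one (datum `1`): `|w₂(t+θ)| ≤ K̂·e^{γ̂t}·w₁(t+θ)`, with constants
depending only on `τ, Ñ, A, γ`. -/
theorem stmt_13 (τ Nt A γ : ℝ) (hτ : 0 < τ) (hNt : 1 < Nt) (hA : 0 < A) (hγ : 0 < γ) :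
    ∃ Khat > (0:ℝ), ∃ γhat > (0:ℝ), ∀ b g w₁ w₂ : ℝ → ℝ,
      ContinuousOn b (Ici 0) → (∀ t ≥ (0:ℝ), b t ∈ Icc (0:ℝ) Nt) →
      ContinuousOn w₁ (Ici (-τ)) → (∀ t ∈ Ioi (0:ℝ), DifferentiableAt ℝ w₁ t) →
      (∀ θ ∈ Icc (-τ) 0, w₁ θ = 1) →
      (∀ t > (0:ℝ), HasDerivAt w₁ (b t * w₁ (t - τ) - w₁ t) t) →
      ContinuousOn g (Ici 0) → (∀ t ≥ (0:ℝ), |g t| ≤ A * Real.exp (2 * γ * t)) →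
      ContinuousOn w₂ (Ici (-τ)) → (∀ t ∈ Ioi (0:ℝ), DifferentiableAt ℝ w₂ t) →
      (∀ θ ∈ Icc (-τ) 0, w₂ θ = 0) →
      (∀ t > (0:ℝ), HasDerivAt w₂ (b t * w₂ (t - τ) - w₂ t + g t) t) →
      ∀ t ≥ (0:ℝ), ∀ θ ∈ Icc (-τ) 0,
        |w₂ (t + θ)| ≤ Khat * Real.exp (γhat * t) * w₁ (t + θ) :=
  stmt_13_general τ Nt A γ hτ hNt hA
end
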